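/- For a positive left-hand formula, the diamond semantics simplifies: if δ is a positive HMLU formula then p ⊨ δ⟨α⟩ψ if and only if there exist p', p'' with p ↠_τ p' →_α p'', p' ⊨ δ, and p'' ⊨ ψ. -/

import Mathlib

variable {X A : Type*}

/-- Formulas of Hennessy-Milner Logic with Until. `none` is the silent action τ. -/
inductive HMLU (A : Type*) where
  | top : HMLU A
  | neg : HMLU A → HMLU A
  | and : HMLU A → HMLU A → HMLU A
  | dia : HMLU A → Option A → HMLU A → HMLU A

/-- Satisfaction: `p ⊨ δ⟨α⟩ψ` iff there is a τ-path from `p` along which every state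
satisfies `δ`, ending in a state that `α`-steps to a state satisfying `ψ`. -/
def Sat (step : Option A → X → X → Prop) : HMLU A → X → Prop
  | .top, _ => True
  | .neg φ, p => ¬ Sat step φ p
  | .and φ ψ, p => Sat step φ p ∧ Sat step ψ p
  | .dia δ α ψ, p => ∃ p' p'', Sat step δ p ∧
      Relation.ReflTransGen (fun x y => step none x y ∧ Sat step δ y) p p' ∧
      step α p' p'' ∧ Sat step ψ p''

mutual
  /-- Positive HMLU formulas. -/
  inductive Positive : HMLU A → Prop
    | top : Positive .top
    | neg {φ : HMLU A} : Negative φ → Positive (.neg φ)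
    | and {φ ψ : HMLU A} : Positive φ → Positive ψ → Positive (.and φ ψ)
    | dia {δ ψ : HMLU A} {α : Option A} : Positive δ → Positive (.dia δ α ψ)
  /-- Negative HMLU formulas. -/
  inductive Negative : HMLU A → Prop
    | top : Negative .top
    | neg {φ : HMLU A} : Positive φ → Negative (.neg φ)
    | and {φ ψ : HMLU A} : Negative φ → Negative ψ → Negative (.and φ ψ)
end

/-- Good formulas: every diamond subformula has a positive left-hand side. -/
inductive Good : HMLU A → Prop
  | top : Good .top
  | neg {φ : HMLU A} : Good φ → Good (.neg φ)
  | and {φ ψ : HMLU A} : Good φ → Good ψ → Good (.and φ ψ)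
  | dia {δ ψ : HMLU A} {α : Option A} : Positive δ → Good δ → Good ψ → Good (.dia δ α ψ)

/-! Positive formulas are preserved backwards along τ-paths and negative ones forwards, by a
simultaneous induction. Hence if a positive `δ` holds at the end of a τ-path it holds at every
state of the path, so the requirement that the path stay inside `δ` is automatic. -/

namespace Relation.ReflTransGen

variable {α : Type*} {r : α → α → Prop} {P : α → Prop} {a b : α}

theorem pred_of_and_right (ha : P a) (h : ReflTransGen (fun x y => r x y ∧ P y) a b) : P b := by
  induction h with
  | refl => exact ha
  | tail _ hbc _ => exact hbc.2

theorem and_right_of_backward (hP : ∀ x y, ReflTransGen r x y → P y → P x)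
    (h : ReflTransGen r a b) (hb : P b) : ReflTransGen (fun x y => r x y ∧ P y) a b := by
  induction h using head_induction_on with
  | refl => exact refl
  | head hac hcb ih => exact head ⟨hac, hP _ _ hcb hb⟩ ih

end Relation.ReflTransGen

open Relation

theorem positive_sat_backward_and_negative_sat_forward (step : Option A → X → X → Prop)
    (φ : HMLU A) :
    (Positive φ → ∀ p q, ReflTransGen (step none) p q → Sat step φ q → Sat step φ p) ∧
    (Negative φ → ∀ p q, ReflTransGen (step none) p q → Sat step φ p → Sat step φ q) := by
  induction φ with
  | top => exact ⟨fun _ _ _ _ _ => trivial, fun _ _ _ _ _ => trivial⟩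
  | neg φ ih =>
    refine ⟨fun hpos p q hpq hq hp => ?_, fun hneg p q hpq hp hq => ?_⟩
    · cases hpos with | neg hneg => exact hq (ih.2 hneg p q hpq hp)
    · cases hneg with | neg hpos => exact hp (ih.1 hpos p q hpq hq)
  | and φ ψ ihφ ihψ =>
    refine ⟨fun hpos p q hpq hq => ?_, fun hneg p q hpq hp => ?_⟩
    · cases hpos with | and h₁ h₂ => exact ⟨ihφ.1 h₁ p q hpq hq.1, ihψ.1 h₂ p q hpq hq.2⟩
    · cases hneg with | and h₁ h₂ => exact ⟨ihφ.2 h₁ p q hpq hp.1, ihψ.2 h₂ p q hpq hp.2⟩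
  | dia δ α ψ ihδ _ =>
    refine ⟨fun hpos p q hpq hq => ?_, nofun⟩
    cases hpos with
    | dia hδ =>
      obtain ⟨q', q'', hδq, hpath, hstep, hψ⟩ := hq
      exact ⟨q', q'', ihδ.1 hδ p q hpq hδq,
        (hpq.and_right_of_backward (ihδ.1 hδ) hδq).trans hpath, hstep, hψ⟩

theorem Positive.sat_of_reflTransGen {step : Option A → X → X → Prop} {φ : HMLU A}
    (hφ : Positive φ) {p q : X} (hpq : ReflTransGen (step none) p q) (hq : Sat step φ q) :
    Sat step φ p :=
  (positive_sat_backward_and_negative_sat_forward step φ).1 hφ p q hpq hq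

theorem nicer_diamond (step : Option A → X → X → Prop)
    (htau : ∀ p : X, step none p p) (δ : HMLU A) (hδ : Positive δ)
    (α : Option A) (ψ : HMLU A) (p : X) :
    Sat step (.dia δ α ψ) p ↔
      ∃ p' p'', Relation.ReflTransGen (step none) p p' ∧ step α p' p'' ∧
        Sat step δ p' ∧ Sat step ψ p'' := by
  constructor
  · rintro ⟨p', p'', hδp, hpath, hstep, hψ⟩
    exact ⟨p', p'', ReflTransGen.mono (fun _ _ h => h.1) _ _ hpath, hstep,
      hpath.pred_of_and_right hδp, hψ⟩
  · rintro ⟨p', p'', hpath, hstep, hδp', hψ⟩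
    exact ⟨p', p'', hδ.sat_of_reflTransGen hpath hδp',
      hpath.and_right_of_backward (fun _ _ => hδ.sat_of_reflTransGen) hδp', hstep, hψ⟩
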